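/- arXiv:2507.01847 — 2 statements merged into one kernel-verified Lean document; each statement's English description precedes it below -/
import Mathlib

section
/- Let A be a densely defined closed C-symmetric operator. A closed operator à is a C-self-adjoint extension of A if and only if A ⊆ à ⊆ CA*C and the subspace L_{Ã} = D(Ã) ⊖ D(A) (orthogonal complement in H_{CA*C}) satisfies L_{Ã} ⊕ (A*C) L_{Ã} = M_{B*}, an orthogonal decomposition in the graph-norm space H_{B*} where B = CAC. -/
open scoped InnerProductSpace
open LinearPMap

variable {H : Type*} [NormedAddCommGroup H] [InnerProductSpace ℂ H]

/-- A conjugation on a complex inner product space: a conjugate-linear involution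
satisfying `⟪Cx, Cy⟫ = ⟪y, x⟫`. -/
structure Conjugation (H : Type*) [NormedAddCommGroup H] [InnerProductSpace ℂ H] where
  toFun : H → H
  map_add' : ∀ x y, toFun (x + y) = toFun x + toFun y
  map_smulc : ∀ (c : ℂ) (x : H), toFun (c • x) = (starRingEnd ℂ c) • toFun x
  invol : ∀ x, toFun (toFun x) = x
  inner_conj : ∀ x y, ⟪toFun x, toFun y⟫_ℂ = ⟪y, x⟫_ℂ

namespace Conjugation

instance : CoeFun (Conjugation H) fun _ => H → H := ⟨toFun⟩

lemma map_zero (C : Conjugation H) : C 0 = 0 := by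
  have := C.map_smulc 0 0; simpa using this

lemma mem_of_mem_image (C : Conjugation H) {S : Set H} {x : H} (hx : x ∈ C.toFun '' S) :
    C x ∈ S := by
  obtain ⟨t, ht, rfl⟩ := hx
  rwa [C.invol]

/-- The image `C(D)` of a subspace under a conjugation, as a subspace. -/
def conjDomain (C : Conjugation H) (D : Submodule ℂ H) : Submodule ℂ H where
  carrier := C.toFun '' (D : Set H)
  add_mem' := by
    rintro a b ⟨x, hx, rfl⟩ ⟨y, hy, rfl⟩
    exact ⟨x + y, D.add_mem hx hy, (C.map_add' x y).symm ▸ rfl⟩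
  zero_mem' := ⟨0, D.zero_mem, C.map_zero⟩
  smul_mem' := by
    rintro c a ⟨x, hx, rfl⟩
    refine ⟨(starRingEnd ℂ c) • x, D.smul_mem _ hx, ?_⟩
    rw [C.map_smulc]; simp

lemma conj_mem (C : Conjugation H) {D : Submodule ℂ H} {x : H} (hx : x ∈ C.conjDomain D) :
    C x ∈ D := C.mem_of_mem_image hx

/-- The operator `C T C` with domain `C(D(T))`. -/
noncomputable def conjOp (C : Conjugation H) (T : H →ₗ.[ℂ] H) : H →ₗ.[ℂ] H where
  domain := C.conjDomain T.domain
  toFun :=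
  { toFun := fun x => C (T ⟨C ↑x, C.conj_mem x.2⟩)
    map_add' := by
      intro x y
      have h : (⟨C ↑(x + y), C.conj_mem (x + y).2⟩ : T.domain)
          = ⟨C ↑x, C.conj_mem x.2⟩ + ⟨C ↑y, C.conj_mem y.2⟩ := by
        apply Subtype.ext; simp [C.map_add']
      try dsimp only
      rw [h, T.map_add, C.map_add']
    map_smul' := by
      intro c x
      have h : (⟨C ↑(c • x), C.conj_mem (c • x).2⟩ : T.domain)
          = (starRingEnd ℂ c) • (⟨C ↑x, C.conj_mem x.2⟩ : T.domain) := by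
        apply Subtype.ext; simp [C.map_smulc]
      try dsimp only
      rw [h, T.map_smul, C.map_smulc]; simp }

/-- `A` is `C`-symmetric: `CAC ⊆ A*`. -/
noncomputable def IsCSymmetric [CompleteSpace H] (C : Conjugation H) (A : H →ₗ.[ℂ] H) : Prop :=
  C.conjOp A ≤ A†

/-- `A` is `C`-self-adjoint: `CAC = A*`. -/
noncomputable def IsCSelfAdjoint [CompleteSpace H] (C : Conjugation H) (A : H →ₗ.[ℂ] H) : Prop :=
  C.conjOp A = A†

end Conjugation
variable [CompleteSpace H]

open scoped InnerProductSpace in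
/-- The kernel `N(I + A*CA*C)`. -/
noncomputable def kerIplusAstarCAstarC (C : Conjugation H) (A : H →ₗ.[ℂ] H) : Set H :=
  {g | ∃ hg : g ∈ (C.conjOp (A†)).domain, ∃ h2 : (C.conjOp (A†)) ⟨g, hg⟩ ∈ (A†).domain,
      g + A† ⟨(C.conjOp (A†)) ⟨g, hg⟩, h2⟩ = 0}

/-- The kernel `N(I + CA*CA*)`. -/
noncomputable def kerIplusCAstarCAstar (C : Conjugation H) (A : H →ₗ.[ℂ] H) : Set H :=
  {g | ∃ hg : g ∈ (A†).domain, ∃ h2 : A† ⟨g, hg⟩ ∈ (C.conjOp (A†)).domain,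
      g + (C.conjOp (A†)) ⟨A† ⟨g, hg⟩, h2⟩ = 0}

/-- The kernel `N(I + A*B*)` where `B = CAC`. -/
noncomputable def kerIplusAstarBstar (C : Conjugation H) (A : H →ₗ.[ℂ] H) : Set H :=
  {g | ∃ hg : g ∈ ((C.conjOp A)†).domain, ∃ h2 : (C.conjOp A)† ⟨g, hg⟩ ∈ (A†).domain,
      g + A† ⟨(C.conjOp A)† ⟨g, hg⟩, h2⟩ = 0}

open scoped InnerProductSpace in
/-- The orthogonal complement of `S` within `W`, with respect to the graph inner
product `⟪f, g⟫ + ⟪Tf, Tg⟫` of `T`. -/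
def graphOrthComplIn (T : H →ₗ.[ℂ] H) (W S : Set H) : Set H :=
  {g | g ∈ W ∧ ∃ hg : g ∈ T.domain, ∀ f ∈ S, ∀ hf : f ∈ T.domain,
      ⟪f, g⟫_ℂ + ⟪T ⟨f, hf⟩, T ⟨g, hg⟩⟫_ℂ = 0}

/-- The deficiency space `N(T* - μ)`. -/
noncomputable def defectSpace (T : H →ₗ.[ℂ] H) (μ : ℂ) : Submodule ℂ H where
  carrier := {z | ∃ hz : z ∈ (T†).domain, T† ⟨z, hz⟩ = μ • z}
  add_mem' := by
    rintro a b ⟨ha, hva⟩ ⟨hb, hvb⟩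
    refine ⟨(T†).domain.add_mem ha hb, ?_⟩
    have h : (⟨a + b, (T†).domain.add_mem ha hb⟩ : (T†).domain) = ⟨a, ha⟩ + ⟨b, hb⟩ := rfl
    rw [h, LinearPMap.map_add, hva, hvb, smul_add]
  zero_mem' := by
    refine ⟨(T†).domain.zero_mem, ?_⟩
    have h : (⟨(0 : H), (T†).domain.zero_mem⟩ : (T†).domain) = 0 := rfl
    rw [h, LinearPMap.map_zero, smul_zero]
  smul_mem' := by
    rintro c a ⟨ha, hva⟩
    refine ⟨(T†).domain.smul_mem c ha, ?_⟩
    have h : (⟨c • a, (T†).domain.smul_mem c ha⟩ : (T†).domain) = c • ⟨a, ha⟩ := rfl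
    rw [h, LinearPMap.map_smul, hva, smul_comm]


/-- The subspace `L_Ã = D(Ã) ⊖ D(A)`, the orthogonal complement of `D(A)` in `D(Ã)`
with respect to the graph inner product of `CA*C`. -/
noncomputable def LAset (C : Conjugation H) (A Atil : H →ₗ.[ℂ] H) : Set H :=
  graphOrthComplIn (C.conjOp (A†)) (Atil.domain : Set H) (A.domain : Set H)

/-- The set `(A*C) L_Ã`. -/
noncomputable def SLAset (C : Conjugation H) (A Atil : H →ₗ.[ℂ] H) : Set H :=
  {x : H | ∃ g ∈ LAset C A Atil, ∃ hg : C g ∈ (A†).domain, A† ⟨C g, hg⟩ = x}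

/-!
Write `S = CA*C`, `J g = A* C g` and `[x, u] = ⟪A* C x, u⟫`, a bilinear form on `D(S)`; for
`Ã ⊆ S` the relation `CÃC ⊆ Ã*` says exactly that `[·,·]` is symmetric on `D(Ã)`. The space
`M = N(I + A*CA*C)` is the graph-orthogonal complement of `D(A)` in `D(S)`, `J` maps `M` into
itself with `J² = -1`, and for `g ∈ M` the graph inner product of `J g` with `x` is
`[g, x] - [x, g]`. So `L_Ã ⊥ J L_Ã` means that `[·,·]` is symmetric on `L_Ã`; since
`D(Ã) = D(A) + L_Ã` and `C`-symmetry of `A` makes `[·,·]` symmetric against `D(A)`, this is the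
same as `CÃC ⊆ Ã*`. For `y ∈ D(Ã*)` the graph-orthogonal projection of `C y` onto `D(Ã)` leaves
a remainder in `M = L_Ã + J L_Ã` that is orthogonal to both summands, hence zero, so
`y ∈ C D(Ã)`. Conversely, if `CÃC = Ã*`, the part of `m ∈ M` orthogonal to `D(Ã)` is
`J` of an element of `L_Ã`.
-/

section

variable {R M N : Type*} [Ring R] [AddCommGroup M] [Module R M] [AddCommGroup N] [Module R N]

namespace LinearPMap

lemma apply_of_eq_add (T : M →ₗ.[R] N) {x p q : M} (hx : x ∈ T.domain) (hp : p ∈ T.domain)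
    (hq : q ∈ T.domain) (h : x = p + q) : T ⟨x, hx⟩ = T ⟨p, hp⟩ + T ⟨q, hq⟩ := by
  subst h
  exact T.map_add ⟨p, hp⟩ ⟨q, hq⟩

lemma apply_of_eq_neg (T : M →ₗ.[R] N) {x y : M} (hx : x ∈ T.domain) (hy : y ∈ T.domain)
    (h : x = -y) : T ⟨x, hx⟩ = -T ⟨y, hy⟩ := by
  subst h
  exact T.map_neg ⟨y, hy⟩

end LinearPMap

end

section

variable {E : Type*} [NormedAddCommGroup E] [InnerProductSpace ℂ E]

lemma inner_add_inner_eq_zero_comm (a b c d : E) :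
    ⟪a, b⟫_ℂ + ⟪c, d⟫_ℂ = 0 ↔ ⟪b, a⟫_ℂ + ⟪d, c⟫_ℂ = 0 := by
  rw [← inner_conj_symm a, ← inner_conj_symm c, ← _root_.map_add, map_eq_zero]

lemma eq_zero_of_inner_self_add_inner_self_eq_zero {a b : E} (h : ⟪a, a⟫_ℂ + ⟪b, b⟫_ℂ = 0) :
    a = 0 := by
  have hre := congrArg RCLike.re h
  rw [_root_.map_add, inner_self_eq_norm_sq, inner_self_eq_norm_sq, _root_.map_zero] at hre
  exact norm_eq_zero.mp (by nlinarith [sq_nonneg ‖a‖, sq_nonneg ‖b‖, norm_nonneg a])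

namespace Conjugation

variable (C : Conjugation E)

lemma map_neg (x : E) : C (-x) = -C x := by
  simpa using C.map_smulc (-1) x

lemma inner_conj_left (x y : E) : ⟪C x, y⟫_ℂ = ⟪C y, x⟫_ℂ := by
  simpa only [C.invol] using C.inner_conj x (C y)

variable {C} {T T' : E →ₗ.[ℂ] E}

lemma mem_conjOp_domain {x : E} : x ∈ (C.conjOp T).domain ↔ C x ∈ T.domain :=
  ⟨C.conj_mem, fun h => ⟨C x, h, C.invol x⟩⟩

lemma conjOp_apply_conj {x : E} (hx : x ∈ T.domain) (h : C x ∈ (C.conjOp T).domain) :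
    C.conjOp T ⟨C x, h⟩ = C (T ⟨x, hx⟩) := by
  change C (T _) = _
  congr 2
  exact Subtype.ext (C.invol x)

lemma conjOp_mono (h : T ≤ T') : C.conjOp T ≤ C.conjOp T' :=
  ⟨fun _ hx => mem_conjOp_domain.mpr (h.1 (mem_conjOp_domain.mp hx)),
    fun x y hxy => congrArg C (h.2 (by simp [hxy]))⟩

lemma conjOp_conjOp (T : E →ₗ.[ℂ] E) : C.conjOp (C.conjOp T) = T := by
  refine LinearPMap.ext (by ext x; rw [mem_conjOp_domain, mem_conjOp_domain, C.invol]) ?_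
  intro x _ _
  change C (C (T _)) = _
  rw [C.invol]
  exact congrArg T (Subtype.ext (C.invol x))

lemma le_conjOp_of_conjOp_le (h : C.conjOp T ≤ T') : T ≤ C.conjOp T' := by
  simpa only [conjOp_conjOp] using conjOp_mono (C := C) h

end Conjugation

end

namespace LinearPMap

variable {T T' R : H →ₗ.[ℂ] H}

lemma adjoint_antitone (hT : Dense (T.domain : Set H)) (h : T ≤ T') : T'† ≤ T† :=
  IsFormalAdjoint.le_adjoint hT fun x y => by
    rw [h.2 (y := ⟨x, h.1 x.2⟩) rfl]
    exact (adjoint_isFormalAdjoint (hT.mono h.1)).symm ⟨x, h.1 x.2⟩ y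

lemma exists_adjoint_apply_eq_neg_iff (hT : Dense (T.domain : Set H)) {q w : H} :
    (∃ hw : w ∈ T†.domain, T† ⟨w, hw⟩ = -q) ↔
      ∀ f : T.domain, ⟪(f : H), q⟫_ℂ + ⟪T f, w⟫_ℂ = 0 := by
  have hconj : ∀ f : T.domain,
      ⟪(f : H), q⟫_ℂ + ⟪T f, w⟫_ℂ = 0 ↔ ⟪-q, (f : H)⟫_ℂ = ⟪w, T f⟫_ℂ := fun f => by
    rw [inner_add_inner_eq_zero_comm, inner_neg_left, neg_eq_iff_add_eq_zero]
  simp_rw [hconj]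
  exact ⟨fun ⟨hw, hval⟩ f => hval ▸ adjoint_isFormalAdjoint hT ⟨w, hw⟩ f,
    fun h => ⟨mem_adjoint_domain_of_exists w ⟨-q, h⟩, adjoint_apply_eq hT _ h⟩⟩

lemma exists_add_graph_orthogonal (hR : R.IsClosed) (hRT : R ≤ T) {x : H} (hx : x ∈ T.domain) :
    ∃ p ∈ R.domain, ∃ q, ∃ hq : q ∈ T.domain, x = p + q ∧
      ∀ f : R.domain, ⟪(f : H), q⟫_ℂ + ⟪R f, T ⟨q, hq⟩⟫_ℂ = 0 := by
  set e := WithLp.prodContinuousLinearEquiv 2 ℂ H H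
  set K := R.graph.comap (e : WithLp 2 (H × H) →ₗ[ℂ] H × H)
  have : CompleteSpace K := (hR.preimage e.continuous).completeSpace_coe
  obtain ⟨y, hy, z, hz, hxyz⟩ := K.exists_add_mem_mem_orthogonal (WithLp.toLp 2 (x, T ⟨x, hx⟩))
  obtain ⟨⟨p, hp⟩, hyp, hyR⟩ := R.mem_graph_iff.mp hy
  have hq : x - p ∈ T.domain := T.domain.sub_mem hx (hRT.1 hp)
  refine ⟨p, hp, x - p, hq, by abel, fun f => ?_⟩
  have hz_eq : z.ofLp = (x - p, T ⟨x - p, hq⟩) := by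
    have hTq : T ⟨x - p, hq⟩ = T ⟨x, hx⟩ - R ⟨p, hp⟩ := by
      rw [hRT.2 (y := ⟨p, hRT.1 hp⟩) rfl, ← T.map_sub]
      rfl
    rw [eq_sub_of_add_eq' hxyz.symm, hTq]
    exact Prod.ext (by simpa [e] using hyp.symm) (by simpa [e] using hyR.symm)
  have hf : WithLp.toLp 2 ((f : H), R f) ∈ K := by
    simp [K, e]
  simpa only [WithLp.prod_inner_apply, hz_eq] using Submodule.inner_right_of_mem_orthogonal hf hz

end LinearPMap

namespace Conjugation

variable {C : Conjugation H} {T : H →ₗ.[ℂ] H}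

lemma IsCSymmetric.adjoint_apply_conj (hsym : C.IsCSymmetric T) {f : H} (hf : f ∈ T.domain)
    (hCf : C f ∈ (T†).domain) : T† ⟨C f, hCf⟩ = C (T ⟨f, hf⟩) :=
  (hsym.2 rfl).symm.trans (conjOp_apply_conj hf (mem_conjOp_domain.mpr (by rwa [C.invol])))

lemma IsCSelfAdjoint.isCSymmetric (hsa : C.IsCSelfAdjoint T) : C.IsCSymmetric T :=
  le_of_eq hsa

lemma isCSymmetric_iff (hT : Dense (T.domain : Set H)) :
    C.IsCSymmetric T ↔ ∀ x u : T.domain, ⟪C (T x), (u : H)⟫_ℂ = ⟪C (T u), (x : H)⟫_ℂ := by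
  constructor
  · intro hsym x u
    have hCu : C u ∈ (C.conjOp T).domain := mem_conjOp_domain.mpr (by rw [C.invol]; exact u.2)
    rw [← hsym.adjoint_apply_conj u.2 (hsym.1 hCu), adjoint_isFormalAdjoint hT, ← C.inner_conj,
      C.invol]
  · intro h
    have hadj : ∀ z (hz : C z ∈ T.domain) (u : T.domain),
        ⟪C (T ⟨C z, hz⟩), (u : H)⟫_ℂ = ⟪z, T u⟫_ℂ := fun z hz u => by
      rw [h ⟨C z, hz⟩ u, C.inner_conj]
    exact ⟨fun z hz => mem_adjoint_domain_of_exists z ⟨_, hadj z (C.conj_mem hz)⟩,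
      fun x y hxy => (adjoint_apply_eq hT y (hxy ▸ hadj x (C.conj_mem x.2))).symm⟩

end Conjugation

def IsConjFormSymmetricOn (C : Conjugation H) (A : H →ₗ.[ℂ] H) (V : Set H) : Prop :=
  ∀ x ∈ V, ∀ u ∈ V, ∀ (hx : C x ∈ (A†).domain) (hu : C u ∈ (A†).domain),
    ⟪A† ⟨C x, hx⟩, u⟫_ℂ = ⟪A† ⟨C u, hu⟩, x⟫_ℂ

section Extensions

open Conjugation

variable {C : Conjugation H} {A T : H →ₗ.[ℂ] H}

lemma mem_kerIplusAstarCAstarC_iff (hA : Dense (A.domain : Set H)) {g : H} :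
    g ∈ kerIplusAstarCAstarC C A ↔ ∃ hg : g ∈ (C.conjOp (A†)).domain,
      ∀ f : A.domain, ⟪(f : H), g⟫_ℂ + ⟪A f, C.conjOp (A†) ⟨g, hg⟩⟫_ℂ = 0 := by
  refine exists_congr fun hg => ?_
  rw [← exists_adjoint_apply_eq_neg_iff hA]
  exact exists_congr fun _ => by rw [add_eq_zero_iff_eq_neg']

lemma neg_mem_kerIplusAstarCAstarC (hA : Dense (A.domain : Set H)) {g : H}
    (hg : g ∈ kerIplusAstarCAstarC C A) : -g ∈ kerIplusAstarCAstarC C A := by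
  obtain ⟨hgS, horth⟩ := (mem_kerIplusAstarCAstarC_iff hA).mp hg
  refine (mem_kerIplusAstarCAstarC_iff hA).mpr ⟨neg_mem hgS, fun f => ?_⟩
  rw [apply_of_eq_neg _ _ hgS rfl, inner_neg_right, inner_neg_right]
  linear_combination -horth f

lemma sub_mem_kerIplusAstarCAstarC (hA : Dense (A.domain : Set H)) {g g' : H}
    (hg : g ∈ kerIplusAstarCAstarC C A) (hg' : g' ∈ kerIplusAstarCAstarC C A) :
    g - g' ∈ kerIplusAstarCAstarC C A := by
  obtain ⟨hgS, horth⟩ := (mem_kerIplusAstarCAstarC_iff hA).mp hg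
  obtain ⟨hg'S, horth'⟩ := (mem_kerIplusAstarCAstarC_iff hA).mp hg'
  refine (mem_kerIplusAstarCAstarC_iff hA).mpr ⟨sub_mem hgS hg'S, fun f => ?_⟩
  have hsplit := apply_of_eq_add _ hgS (sub_mem hgS hg'S) hg'S (sub_add_cancel g g').symm
  have e := congrArg (inner ℂ (A f)) hsplit
  rw [inner_add_right] at e
  rw [inner_sub_right]
  linear_combination horth f - horth' f - e

lemma mem_LAset_iff (hA : Dense (A.domain : Set H)) (hsym : C.IsCSymmetric A) {x : H} :
    x ∈ LAset C A T ↔ x ∈ T.domain ∧ x ∈ kerIplusAstarCAstarC C A := by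
  have hAS : A ≤ C.conjOp (A†) := le_conjOp_of_conjOp_le hsym
  rw [mem_kerIplusAstarCAstarC_iff hA]
  refine and_congr_right fun _ => exists_congr fun hx => ⟨fun h f => ?_, fun h f hf hfS => ?_⟩
  · rw [hAS.2 (y := ⟨f, hAS.1 f.2⟩) rfl]
    exact h f f.2 _
  · rw [← hAS.2 (x := ⟨f, hf⟩) (y := ⟨f, hfS⟩) rfl]
    exact h ⟨f, hf⟩

lemma LAset_subset_kerIplusAstarCAstarC (hA : Dense (A.domain : Set H))
    (hsym : C.IsCSymmetric A) : LAset C A T ⊆ kerIplusAstarCAstarC C A :=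
  fun _ hx => ((mem_LAset_iff hA hsym).mp hx).2

lemma adjoint_conj_adjoint_conj {g : H} (hg : g ∈ kerIplusAstarCAstarC C A)
    (h1 : C g ∈ (A†).domain) (h2 : C (A† ⟨C g, h1⟩) ∈ (A†).domain) :
    A† ⟨C (A† ⟨C g, h1⟩), h2⟩ = -g :=
  eq_neg_of_add_eq_zero_right hg.2.2

lemma conjOp_adjoint_apply_adjoint_conj {g : H} (hg : g ∈ kerIplusAstarCAstarC C A)
    (h1 : C g ∈ (A†).domain) (hy : A† ⟨C g, h1⟩ ∈ (C.conjOp (A†)).domain) :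
    C.conjOp (A†) ⟨A† ⟨C g, h1⟩, hy⟩ = -C g := by
  change C (A† ⟨C _, _⟩) = _
  rw [adjoint_conj_adjoint_conj hg h1, C.map_neg]

lemma adjoint_conj_mem_kerIplusAstarCAstarC {g : H} (hg : g ∈ kerIplusAstarCAstarC C A)
    (h1 : C g ∈ (A†).domain) : A† ⟨C g, h1⟩ ∈ kerIplusAstarCAstarC C A := by
  have hy : A† ⟨C g, h1⟩ ∈ (C.conjOp (A†)).domain := mem_conjOp_domain.mpr hg.2.1
  have hSy := conjOp_adjoint_apply_adjoint_conj hg h1 hy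
  have h2 : C.conjOp (A†) ⟨A† ⟨C g, h1⟩, hy⟩ ∈ (A†).domain := hSy ▸ neg_mem h1
  exact ⟨hy, h2, by rw [apply_of_eq_neg _ h2 h1 hSy, add_neg_cancel]⟩

lemma SLAset_subset_kerIplusAstarCAstarC (hA : Dense (A.domain : Set H))
    (hsym : C.IsCSymmetric A) : SLAset C A T ⊆ kerIplusAstarCAstarC C A := by
  rintro _ ⟨g, hg, h1g, rfl⟩
  exact adjoint_conj_mem_kerIplusAstarCAstarC (LAset_subset_kerIplusAstarCAstarC hA hsym hg) h1g

lemma graphInner_adjoint_conj {g x : H} (hg : g ∈ kerIplusAstarCAstarC C A)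
    (h1 : C g ∈ (A†).domain) (hy : A† ⟨C g, h1⟩ ∈ (C.conjOp (A†)).domain)
    (hx : x ∈ (C.conjOp (A†)).domain) :
    ⟪A† ⟨C g, h1⟩, x⟫_ℂ + ⟪C.conjOp (A†) ⟨A† ⟨C g, h1⟩, hy⟩, C.conjOp (A†) ⟨x, hx⟩⟫_ℂ
      = ⟪A† ⟨C g, h1⟩, x⟫_ℂ - ⟪A† ⟨C x, C.conj_mem hx⟩, g⟫_ℂ := by
  rw [conjOp_adjoint_apply_adjoint_conj hg h1 hy, inner_neg_left, ← sub_eq_add_neg]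
  exact congrArg _ (C.inner_conj _ _)

lemma IsConjFormSymmetricOn.mono {V W : Set H} (h : IsConjFormSymmetricOn C A V) (hWV : W ⊆ V) :
    IsConjFormSymmetricOn C A W :=
  fun x hx u hu => h x (hWV hx) u (hWV hu)

lemma Conjugation.IsCSelfAdjoint.le_conjOp_adjoint (hA : Dense (A.domain : Set H)) (hAT : A ≤ T)
    (hsa : C.IsCSelfAdjoint T) : T ≤ C.conjOp (A†) :=
  le_conjOp_of_conjOp_le (hsa.isCSymmetric.trans (adjoint_antitone hA hAT))

lemma conj_apply_eq_adjoint_conj (hTS : T ≤ C.conjOp (A†)) (u : T.domain)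
    (h1 : C u ∈ (A†).domain) : C (T u) = A† ⟨C u, h1⟩ := by
  rw [hTS.2 (y := ⟨u, hTS.1 u.2⟩) rfl]
  exact C.invol _

lemma isCSymmetric_iff_isConjFormSymmetricOn (hT : Dense (T.domain : Set H))
    (hTS : T ≤ C.conjOp (A†)) : C.IsCSymmetric T ↔ IsConjFormSymmetricOn C A T.domain := by
  rw [isCSymmetric_iff hT]
  refine ⟨fun h x hx u hu h1x h1u => ?_, fun h x u => ?_⟩
  · simpa only [conj_apply_eq_adjoint_conj hTS ⟨x, hx⟩ h1x,
      conj_apply_eq_adjoint_conj hTS ⟨u, hu⟩ h1u] using h ⟨x, hx⟩ ⟨u, hu⟩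
  · have h1 : ∀ v : T.domain, C v ∈ (A†).domain := fun v => C.conj_mem (hTS.1 v.2)
    rw [conj_apply_eq_adjoint_conj hTS x (h1 x), conj_apply_eq_adjoint_conj hTS u (h1 u)]
    exact h x x.2 u u.2 _ _

lemma isConjFormSymmetricOn_LAset_iff (hA : Dense (A.domain : Set H)) (hsym : C.IsCSymmetric A) :
    IsConjFormSymmetricOn C A (LAset C A T) ↔
      ∀ x ∈ LAset C A T, ∀ y ∈ SLAset C A T,
        ∀ (hx : x ∈ (C.conjOp (A†)).domain) (hy : y ∈ (C.conjOp (A†)).domain),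
        ⟪x, y⟫_ℂ + ⟪(C.conjOp (A†)) ⟨x, hx⟩, (C.conjOp (A†)) ⟨y, hy⟩⟫_ℂ = 0 := by
  have hM := LAset_subset_kerIplusAstarCAstarC (T := T) hA hsym
  constructor
  · rintro h x hx _ ⟨g, hg, h1g, rfl⟩ hxS hy
    rw [inner_add_inner_eq_zero_comm, graphInner_adjoint_conj (hM hg) h1g hy hxS,
      h g hg x hx h1g (C.conj_mem hxS), sub_self]
  · intro h x hx u hu h1x h1u
    have hxS : x ∈ (C.conjOp (A†)).domain := mem_conjOp_domain.mpr h1x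
    have hy := mem_conjOp_domain.mpr (hM hu).2.1
    have horth := h x hx _ ⟨u, hu, h1u, rfl⟩ hxS hy
    rw [inner_add_inner_eq_zero_comm, graphInner_adjoint_conj (hM hu) h1u hy hxS,
      sub_eq_zero] at horth
    exact horth.symm

lemma exists_add_mem_LAset (hA : Dense (A.domain : Set H)) (hsym : C.IsCSymmetric A)
    (hclosedA : A.IsClosed) (hAT : A ≤ T) (hTS : T ≤ C.conjOp (A†)) {x : H} (hx : x ∈ T.domain) :
    ∃ f ∈ A.domain, ∃ l ∈ LAset C A T, x = f + l := by
  obtain ⟨f, hf, l, hl, hxfl, horth⟩ :=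
    exists_add_graph_orthogonal hclosedA (le_conjOp_of_conjOp_le hsym) (hTS.1 hx)
  have hlT : l ∈ T.domain := by
    simpa [hxfl] using T.domain.sub_mem hx (hAT.1 hf)
  exact ⟨f, hf, l, (mem_LAset_iff hA hsym).mpr
    ⟨hlT, (mem_kerIplusAstarCAstarC_iff hA).mpr ⟨hl, horth⟩⟩, hxfl⟩

lemma inner_adjoint_conj_comm (hA : Dense (A.domain : Set H)) (hsym : C.IsCSymmetric A)
    {f w : H} (hf : f ∈ A.domain) (hCf : C f ∈ (A†).domain) (hw : C w ∈ (A†).domain) :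
    ⟪A† ⟨C w, hw⟩, f⟫_ℂ = ⟪A† ⟨C f, hCf⟩, w⟫_ℂ := by
  refine (adjoint_isFormalAdjoint hA ⟨C w, hw⟩ ⟨f, hf⟩).trans ?_
  rw [C.inner_conj_left, hsym.adjoint_apply_conj hf hCf]

lemma IsConjFormSymmetricOn.domain_of_LAset (hA : Dense (A.domain : Set H))
    (hsym : C.IsCSymmetric A) (hclosedA : A.IsClosed) (hAT : A ≤ T) (hTS : T ≤ C.conjOp (A†))
    (hL : IsConjFormSymmetricOn C A (LAset C A T)) : IsConjFormSymmetricOn C A T.domain := by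
  have hCA : ∀ {f}, f ∈ A.domain → C f ∈ (A†).domain :=
    fun hf => C.conj_mem ((le_conjOp_of_conjOp_le hsym).1 hf)
  have hCL : ∀ {l}, l ∈ LAset C A T → C l ∈ (A†).domain := fun hl => C.conj_mem hl.2.1
  intro x hx u hu h1x h1u
  obtain ⟨f, hf, l, hl, rfl⟩ := exists_add_mem_LAset hA hsym hclosedA hAT hTS hx
  obtain ⟨f', hf', l', hl', rfl⟩ := exists_add_mem_LAset hA hsym hclosedA hAT hTS hu
  rw [apply_of_eq_add _ h1x (hCA hf) (hCL hl) (C.map_add' f l),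
    apply_of_eq_add _ h1u (hCA hf') (hCL hl') (C.map_add' f' l')]
  simp only [inner_add_left, inner_add_right]
  linear_combination inner_adjoint_conj_comm hA hsym hf' (hCA hf') (hCA hf)
    + inner_adjoint_conj_comm hA hsym hf' (hCA hf') (hCL hl)
    - inner_adjoint_conj_comm hA hsym hf (hCA hf) (hCL hl')
    + hL l hl l' hl' (hCL hl) (hCL hl')

lemma mem_kerIplusAstarCAstarC_of_graphOrthogonal (hA : Dense (A.domain : Set H)) (hAT : A ≤ T)
    {q : H} (hq : q ∈ (C.conjOp (A†)).domain)
    (horth : ∀ f : T.domain, ⟪(f : H), q⟫_ℂ + ⟪T f, C.conjOp (A†) ⟨q, hq⟩⟫_ℂ = 0) :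
    q ∈ kerIplusAstarCAstarC C A :=
  (mem_kerIplusAstarCAstarC_iff hA).mpr ⟨hq, fun f => by
    simpa only [hAT.2 (y := ⟨f, hAT.1 f.2⟩) rfl] using horth ⟨f, hAT.1 f.2⟩⟩

lemma exists_mem_LAset_mem_SLAset_add (hA : Dense (A.domain : Set H)) (hsym : C.IsCSymmetric A)
    (hAT : A ≤ T) (hclosed : T.IsClosed) (hTS : T ≤ C.conjOp (A†)) (hsa : C.IsCSelfAdjoint T) :
    ∀ m ∈ kerIplusAstarCAstarC C A, ∃ x ∈ LAset C A T, ∃ y ∈ SLAset C A T, m = x + y := by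
  intro m hm
  obtain ⟨hmS, -⟩ := (mem_kerIplusAstarCAstarC_iff hA).mp hm
  obtain ⟨p, hp, q, hq, hmpq, horth⟩ := exists_add_graph_orthogonal hclosed hTS hmS
  have hqM := mem_kerIplusAstarCAstarC_of_graphOrthogonal hA hAT hq horth
  have hpL : p ∈ LAset C A T := (mem_LAset_iff hA hsym).mpr
    ⟨hp, by simpa [hmpq] using sub_mem_kerIplusAstarCAstarC hA hm hqM⟩
  have h1q : C q ∈ (A†).domain := C.conj_mem hq
  -- `T† (S q) = -q`, and `D(T†) = C D(T)` puts `C S q = A* C q` into `D(T)`.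
  obtain ⟨hSq, -⟩ := (exists_adjoint_apply_eq_neg_iff (hA.mono hAT.1)).mpr horth
  have hjT : A† ⟨C q, h1q⟩ ∈ T.domain := by
    rw [← (show C.conjOp T = T† from hsa)] at hSq
    have hCSq := C.conj_mem hSq
    rwa [show C.conjOp (A†) ⟨q, hq⟩ = C (A† ⟨C q, h1q⟩) from rfl, C.invol] at hCSq
  have hjM := adjoint_conj_mem_kerIplusAstarCAstarC hqM h1q
  have hgL : -A† ⟨C q, h1q⟩ ∈ LAset C A T :=
    (mem_LAset_iff hA hsym).mpr ⟨neg_mem hjT, neg_mem_kerIplusAstarCAstarC hA hjM⟩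
  have h1g : C (-A† ⟨C q, h1q⟩) ∈ (A†).domain := (C.map_neg _).symm ▸ neg_mem hqM.2.1
  refine ⟨p, hpL, q, ⟨_, hgL, h1g, ?_⟩, hmpq⟩
  rw [apply_of_eq_neg _ h1g hqM.2.1 (C.map_neg _)]
  exact neg_eq_iff_eq_neg.mpr (adjoint_conj_adjoint_conj hqM h1q _)

lemma graphInner_adjoint_conj_conj_eq_zero (hA : Dense (A.domain : Set H)) (hAT : A ≤ T)
    (hTS : T ≤ C.conjOp (A†)) {g y : H} (hgT : g ∈ T.domain) (hgM : g ∈ kerIplusAstarCAstarC C A)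
    (h1g : C g ∈ (A†).domain) (hJg : A† ⟨C g, h1g⟩ ∈ (C.conjOp (A†)).domain)
    (hy : y ∈ (T†).domain) (hCy : C y ∈ (C.conjOp (A†)).domain) :
    ⟪A† ⟨C g, h1g⟩, C y⟫_ℂ
      + ⟪C.conjOp (A†) ⟨A† ⟨C g, h1g⟩, hJg⟩, C.conjOp (A†) ⟨C y, hCy⟩⟫_ℂ = 0 := by
  rw [graphInner_adjoint_conj hgM h1g hJg hCy, sub_eq_zero,
    ← conj_apply_eq_adjoint_conj hTS ⟨g, hgT⟩ h1g, C.inner_conj,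
    ← adjoint_isFormalAdjoint (hA.mono hAT.1) ⟨y, hy⟩ ⟨g, hgT⟩]
  exact congrArg (inner ℂ · g) ((adjoint_antitone hA hAT).2 (C.invol y).symm)

lemma adjoint_domain_le_conjOp_domain (hA : Dense (A.domain : Set H)) (hsym : C.IsCSymmetric A)
    (hAT : A ≤ T) (hclosed : T.IsClosed) (hTS : T ≤ C.conjOp (A†))
    (hT : IsConjFormSymmetricOn C A T.domain)
    (hM : ∀ m ∈ kerIplusAstarCAstarC C A, ∃ x ∈ LAset C A T, ∃ y ∈ SLAset C A T, m = x + y) :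
    (T†).domain ≤ (C.conjOp T).domain := by
  intro y hy
  have hCy : C y ∈ (C.conjOp (A†)).domain :=
    mem_conjOp_domain.mpr (by rw [C.invol]; exact (adjoint_antitone hA hAT).1 hy)
  obtain ⟨p, hp, q, hq, hCypq, horth⟩ := exists_add_graph_orthogonal hclosed hTS hCy
  obtain ⟨l, hl, _, ⟨g, hg, h1g, rfl⟩, hqlg⟩ :=
    hM q (mem_kerIplusAstarCAstarC_of_graphOrthogonal hA hAT hq horth)
  obtain ⟨hgT, hgM⟩ := (mem_LAset_iff hA hsym).mp hg
  have hJg : A† ⟨C g, h1g⟩ ∈ (C.conjOp (A†)).domain := mem_conjOp_domain.mpr hgM.2.1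
  have hpS := hTS.1 hp
  -- `q = l + J g` is graph-orthogonal to `l ∈ D(T)` by construction, and to `J g` because
  -- `C y` and `p` are.
  have hy0 := graphInner_adjoint_conj_conj_eq_zero hA hAT hTS hgT hgM h1g hJg hy hCy
  have hp0 : ⟪A† ⟨C g, h1g⟩, p⟫_ℂ
      + ⟪C.conjOp (A†) ⟨A† ⟨C g, h1g⟩, hJg⟩, C.conjOp (A†) ⟨p, hpS⟩⟫_ℂ = 0 := by
    rw [graphInner_adjoint_conj hgM h1g hJg hpS, sub_eq_zero]
    exact hT g hgT p hp h1g _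
  have hl0 := horth ⟨l, hl.1⟩
  rw [hTS.2 (y := ⟨l, hl.2.1⟩) rfl] at hl0
  have hSCy := apply_of_eq_add _ hCy hpS hq hCypq
  have hSq := apply_of_eq_add _ hq hl.2.1 hJg hqlg
  have hq0 : q = 0 := by
    refine eq_zero_of_inner_self_add_inner_self_eq_zero (b := C.conjOp (A†) ⟨q, hq⟩) ?_
    have e1 : ⟪q, q⟫_ℂ = ⟪l, q⟫_ℂ + ⟪A† ⟨C g, h1g⟩, q⟫_ℂ := by rw [← inner_add_left, ← hqlg]
    have e2 := congrArg (inner ℂ · (C.conjOp (A†) ⟨q, hq⟩)) hSq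
    have e3 : ⟪A† ⟨C g, h1g⟩, C y⟫_ℂ = ⟪A† ⟨C g, h1g⟩, p⟫_ℂ + ⟪A† ⟨C g, h1g⟩, q⟫_ℂ := by
      rw [← inner_add_right, ← hCypq]
    have e4 := congrArg (inner ℂ (C.conjOp (A†) ⟨A† ⟨C g, h1g⟩, hJg⟩)) hSCy
    simp only [inner_add_left, inner_add_right] at e2 e4
    linear_combination e1 + e2 + hl0 + hy0 - hp0 - e3 - e4
  exact mem_conjOp_domain.mpr (by rw [hCypq, hq0, add_zero]; exact hp)

end Extensions

theorem stmt_9 (C : Conjugation H) (A Atil : H →ₗ.[ℂ] H) (hA : Dense (A.domain : Set H))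
    (hclosedA : A.IsClosed) (hsym : C.IsCSymmetric A) (hclosed : Atil.IsClosed) :
    (A ≤ Atil ∧ C.IsCSelfAdjoint Atil) ↔
      (A ≤ Atil ∧ Atil ≤ C.conjOp (A†)
        ∧ (∀ x ∈ LAset C A Atil, ∀ y ∈ SLAset C A Atil,
            ∀ (hx : x ∈ (C.conjOp (A†)).domain) (hy : y ∈ (C.conjOp (A†)).domain),
            ⟪x, y⟫_ℂ + ⟪(C.conjOp (A†)) ⟨x, hx⟩, (C.conjOp (A†)) ⟨y, hy⟩⟫_ℂ = 0)
        ∧ LAset C A Atil ⊆ kerIplusAstarCAstarC C A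
        ∧ SLAset C A Atil ⊆ kerIplusAstarCAstarC C A
        ∧ ∀ m ∈ kerIplusAstarCAstarC C A,
            ∃ x ∈ LAset C A Atil, ∃ y ∈ SLAset C A Atil, m = x + y) := by
  constructor
  · rintro ⟨hAT, hsa⟩
    have hTS := Conjugation.IsCSelfAdjoint.le_conjOp_adjoint hA hAT hsa
    have hform := (isCSymmetric_iff_isConjFormSymmetricOn (hA.mono hAT.1) hTS).mp
      (Conjugation.IsCSelfAdjoint.isCSymmetric hsa)
    exact ⟨hAT, hTS, (isConjFormSymmetricOn_LAset_iff hA hsym).mp (hform.mono fun x hx => hx.1),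
      LAset_subset_kerIplusAstarCAstarC hA hsym, SLAset_subset_kerIplusAstarCAstarC hA hsym,
      exists_mem_LAset_mem_SLAset_add hA hsym hAT hclosed hTS hsa⟩
  · rintro ⟨hAT, hTS, hO, -, -, hM⟩
    have hform := ((isConjFormSymmetricOn_LAset_iff hA hsym).mpr hO).domain_of_LAset
      hA hsym hclosedA hAT hTS
    have hle := (isCSymmetric_iff_isConjFormSymmetricOn (hA.mono hAT.1) hTS).mpr hform
    exact ⟨hAT, eq_of_le_of_domain_eq hle
      (le_antisymm hle.1 (adjoint_domain_le_conjOp_domain hA hsym hAT hclosed hTS hform hM))⟩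
end

section
/- For each C-self-adjoint extension à of a densely defined closed C-symmetric operator A, the codimension of D(Ã) in D(CA*C) equals the dimension of D(Ã)/D(A): dim(D(CA*C)/D(Ã)) = dim(D(Ã)/D(A)). -/
open scoped InnerProductSpace
open LinearPMap

variable {H : Type*} [NormedAddCommGroup H] [InnerProductSpace ℂ H]

variable [CompleteSpace H]

/-! Since `Ã = C Ã† C`, the domain of `Ã` is `C D(Ã†)` and `Ã` is closed, and `A ⊆ Ã` gives
`Ã† ⊆ A†`. The conjugation maps `D(CA†C)/D(Ã)` conjugate-linearly onto `D(A†)/D(Ã†)`.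
Quotients of domains are quotients of graphs, and the graph of an adjoint is the orthogonal
complement of the rotated graph `{(y, -x) | (x, y) ∈ G}`. For closed subspaces `M ⊆ N` of a
Hilbert space both `N/M` and `M^⊥/N^⊥` are isomorphic to `N ⊓ M^⊥`, so
`D(A†)/D(Ã†) ≅ G(Ã)/G(A) ≅ D(Ã)/D(A)`. -/

universe u

namespace Submodule

variable {R : Type*} [Ring R] {σ σ' : R →+* R} [RingHomInvPair σ σ'] [RingHomInvPair σ' σ]
  {M M' : Type u} [AddCommGroup M] [Module R M] [AddCommGroup M'] [Module R M']

theorem _root_.LinearEquiv.rank_eq_of_semilinear (e : M ≃ₛₗ[σ] M') :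
    Module.rank R M = Module.rank R M' :=
  rank_eq_of_equiv_equiv σ e.toAddEquiv
    ⟨fun a b h => by simpa using congrArg σ' h, RingHomSurjective.is_surjective⟩ e.map_smulₛₗ

theorem rank_quotient_map_of_injOn {f : M →ₛₗ[σ] M'} {p q : Submodule R M} (hpq : p ≤ q)
    (hf : Set.InjOn f q) :
    Module.rank R (↥(q.map f) ⧸ comap (q.map f).subtype (p.map f))
      = Module.rank R (↥q ⧸ comap q.subtype p) := by
  have hinj : Function.Injective (f.domRestrict q) := fun x y h =>
    Subtype.ext (hf x.2 y.2 h)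
  let e : q ≃ₛₗ[σ] q.map f :=
    (LinearEquiv.ofInjective _ hinj).trans (LinearEquiv.ofEq _ _ (LinearMap.range_domRestrict q f))
  refine (Submodule.Quotient.equiv _ _ e ?_).rank_eq_of_semilinear.symm
  ext ⟨y, hy⟩
  simp only [mem_map, mem_comap, coe_subtype]
  constructor
  · rintro ⟨x, hxp, hx⟩
    exact ⟨x, hxp, congrArg Subtype.val hx⟩
  · rintro ⟨x, hxp, rfl⟩
    exact ⟨⟨x, hpq hxp⟩, hxp, rfl⟩

variable {V : Type*} [AddCommGroup V] [Module R V]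

theorem rank_quotient_eq_rank_inf_of_isCompl {M M' N : Submodule R V} (h : IsCompl M M')
    (hMN : M ≤ N) : Module.rank R (↥N ⧸ comap N.subtype M) = Module.rank R ↥(N ⊓ M') := by
  rw [(quotientEquivOfIsCompl _ _ (isCompl_comap_subtype_of_isCompl_of_le h hMN)).rank_eq,
    (equivSubtypeMap N (comap N.subtype M')).rank_eq, map_comap_subtype]

variable {𝕜 K : Type*} [RCLike 𝕜] [NormedAddCommGroup K] [InnerProductSpace 𝕜 K]

theorem rank_quotient_orthogonal {M N : Submodule 𝕜 K} [M.HasOrthogonalProjection]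
    [N.HasOrthogonalProjection] (hMN : M ≤ N) :
    Module.rank 𝕜 (↥Mᗮ ⧸ comap Mᗮ.subtype Nᗮ) = Module.rank 𝕜 (↥N ⧸ comap N.subtype M) := by
  rw [rank_quotient_eq_rank_inf_of_isCompl N.isCompl_orthogonal.symm (orthogonal_le hMN),
    rank_quotient_eq_rank_inf_of_isCompl M.isCompl_orthogonal hMN, inf_comm]

variable {E F : Type*} [NormedAddCommGroup E] [InnerProductSpace 𝕜 E]
  [NormedAddCommGroup F] [InnerProductSpace 𝕜 F] [CompleteSpace E] [CompleteSpace F]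

theorem rank_quotient_adjoint {g g' : Submodule 𝕜 (E × F)} (h : g ≤ g')
    (hg : IsClosed (g : Set (E × F))) (hg' : IsClosed (g' : Set (E × F))) :
    Module.rank 𝕜 (↥g.adjoint ⧸ comap g.adjoint.subtype g'.adjoint)
      = Module.rank 𝕜 (↥g' ⧸ comap g'.subtype g) := by
  -- `g.adjoint` is the orthogonal complement of `Φ g`, read back in `F × E`
  set Φ := (LinearEquiv.skewSwap 𝕜 F E).symm.trans (WithLp.linearEquiv 2 𝕜 (F × E)).symm
  have hproj : ∀ k : Submodule 𝕜 (E × F), IsClosed (k : Set (E × F)) →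
      (k.map Φ.toLinearMap).HasOrthogonalProjection := by
    intro k hk
    have hclosed : IsClosed ((k.map Φ.toLinearMap : Submodule 𝕜 (WithLp 2 (F × E))) :
        Set (WithLp 2 (F × E))) := by
      rw [Submodule.map_coe, LinearEquiv.coe_coe, LinearEquiv.image_eq_preimage_symm]
      exact hk.preimage
        ((continuous_snd.neg.prodMk continuous_fst).comp (WithLp.prod_continuous_ofLp 2 F E))
    have := hclosed.completeSpace_coe
    infer_instance
  have := hproj g hg
  have := hproj g' hg'
  rw [Submodule.adjoint, Submodule.adjoint,
    rank_quotient_map_of_injOn (orthogonal_le (map_mono h)) (LinearEquiv.injective _).injOn,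
    rank_quotient_orthogonal (map_mono h), rank_quotient_map_of_injOn h Φ.injective.injOn]

end Submodule

namespace LinearPMap

section Graph

variable {R : Type*} [Ring R] {E F : Type u} [AddCommGroup E] [Module R E] [AddCommGroup F]
  [Module R F]

theorem rank_quotient_domain_eq_rank_quotient_graph {S T : E →ₗ.[R] F} (h : S ≤ T) :
    Module.rank R (↥T.domain ⧸ Submodule.comap T.domain.subtype S.domain)
      = Module.rank R (↥T.graph ⧸ Submodule.comap T.graph.subtype S.graph) := by
  rw [← graph_map_fst_eq_domain T, ← graph_map_fst_eq_domain S]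
  exact Submodule.rank_quotient_map_of_injOn (le_graph_of_le h)
    fun x hx y hy hxy => Prod.ext hxy (T.mem_graph_snd_inj' hx hy hxy)

end Graph

variable {𝕜 : Type*} [RCLike 𝕜] {E F : Type u} [NormedAddCommGroup E] [InnerProductSpace 𝕜 E]
  [NormedAddCommGroup F] [InnerProductSpace 𝕜 F] [CompleteSpace E]

theorem adjoint_le_adjoint {S T : E →ₗ.[𝕜] F} (hS : Dense (S.domain : Set E)) (h : S ≤ T) :
    T† ≤ S† := by
  refine IsFormalAdjoint.le_adjoint hS fun x y => ?_
  rw [h.2 (y := ⟨x, h.1 x.2⟩) rfl]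
  exact (adjoint_isFormalAdjoint (hS.mono h.1)).symm ⟨x, h.1 x.2⟩ y

theorem rank_quotient_adjoint_domain [CompleteSpace F] {S T : E →ₗ.[𝕜] F}
    (hS : Dense (S.domain : Set E)) (h : S ≤ T) (hSc : S.IsClosed) (hTc : T.IsClosed) :
    Module.rank 𝕜 (↥S†.domain ⧸ Submodule.comap S†.domain.subtype T†.domain)
      = Module.rank 𝕜 (↥T.domain ⧸ Submodule.comap T.domain.subtype S.domain) := by
  rw [rank_quotient_domain_eq_rank_quotient_graph (adjoint_le_adjoint hS h),
    rank_quotient_domain_eq_rank_quotient_graph h, adjoint_graph_eq_graph_adjoint hS,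
    adjoint_graph_eq_graph_adjoint (hS.mono h.1)]
  exact Submodule.rank_quotient_adjoint (le_graph_of_le h) hSc hTc

end LinearPMap

namespace Conjugation

variable {V : Type*} [NormedAddCommGroup V] [InnerProductSpace ℂ V] (C : Conjugation V)

def toLinearEquiv : V ≃ₗ⋆[ℂ] V where
  toFun := C
  invFun := C
  map_add' := C.map_add'
  map_smul' := C.map_smulc
  left_inv := C.invol
  right_inv := C.invol

theorem norm_map (x : V) : ‖C x‖ = ‖x‖ := by
  rw [norm_eq_sqrt_re_inner (𝕜 := ℂ), norm_eq_sqrt_re_inner (𝕜 := ℂ) x, C.inner_conj]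

theorem continuous : Continuous C :=
  (AddMonoidHomClass.isometry_of_norm C.toLinearEquiv C.norm_map).continuous

theorem conjDomain_eq_map (D : Submodule ℂ V) :
    C.conjDomain D = D.map C.toLinearEquiv.toLinearMap := rfl

theorem conjDomain_conjDomain (D : Submodule ℂ V) : C.conjDomain (C.conjDomain D) = D := by
  ext x
  constructor
  · intro hx
    simpa [C.invol] using C.conj_mem (C.conj_mem hx)
  · intro hx
    exact ⟨C x, ⟨x, hx, rfl⟩, C.invol x⟩

theorem rank_quotient_conjDomain {D D' : Submodule ℂ V} (h : D' ≤ D) :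
    Module.rank ℂ (↥(C.conjDomain D) ⧸ Submodule.comap (C.conjDomain D).subtype (C.conjDomain D'))
      = Module.rank ℂ (↥D ⧸ Submodule.comap D.subtype D') := by
  rw [conjDomain_eq_map, conjDomain_eq_map]
  exact Submodule.rank_quotient_map_of_injOn h C.toLinearEquiv.injective.injOn

theorem coe_graph_conjOp (T : V →ₗ.[ℂ] V) :
    ((C.conjOp T).graph : Set (V × V)) = Prod.map C C ⁻¹' T.graph := by
  ext ⟨x, y⟩
  simp only [SetLike.mem_coe, Set.mem_preimage, Prod.map, LinearPMap.mem_graph_iff]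
  constructor
  · rintro ⟨⟨x', hx'⟩, rfl, rfl⟩
    exact ⟨⟨C x', C.conj_mem hx'⟩, rfl, (C.invol _).symm⟩
  · rintro ⟨⟨z, hz⟩, rfl, hTz⟩
    refine ⟨⟨x, C x, hz, C.invol x⟩, rfl, ?_⟩
    change C (T ⟨C x, hz⟩) = y
    rw [hTz, C.invol]

theorem isClosed_of_isClosed_conjOp {T : V →ₗ.[ℂ] V} (h : (C.conjOp T).IsClosed) : T.IsClosed := by
  have hC : Continuous (Prod.map C C) := C.continuous.prodMap C.continuous
  have : (T.graph : Set (V × V)) = Prod.map C C ⁻¹' (C.conjOp T).graph := by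
    rw [coe_graph_conjOp, ← Set.preimage_comp]
    ext ⟨x, y⟩
    simp [C.invol]
  rw [LinearPMap.IsClosed, this]
  exact h.preimage hC

end Conjugation

theorem stmt_10_general (C : Conjugation H) (A Atil : H →ₗ.[ℂ] H) (hA : Dense (A.domain : Set H))
    (hclosedA : A.IsClosed) (hext : A ≤ Atil) (hsa : C.IsCSelfAdjoint Atil) :
    Module.rank ℂ
        (↥(C.conjOp (A†)).domain ⧸ Submodule.comap (C.conjOp (A†)).domain.subtype Atil.domain)
      = Module.rank ℂ (↥Atil.domain ⧸ Submodule.comap Atil.domain.subtype A.domain) := by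
  have hAtil : Dense (Atil.domain : Set H) := hA.mono hext.1
  have hdom : C.conjDomain (Atil†).domain = Atil.domain := by
    rw [← hsa]
    exact C.conjDomain_conjDomain Atil.domain
  have hclosed : Atil.IsClosed :=
    C.isClosed_of_isClosed_conjOp (hsa ▸ adjoint_isClosed hAtil)
  calc _ = Module.rank ℂ (↥(C.conjDomain (A†).domain) ⧸
        Submodule.comap (C.conjDomain (A†).domain).subtype (C.conjDomain (Atil†).domain)) := by
        rw [hdom]; rfl
    _ = _ := C.rank_quotient_conjDomain (adjoint_le_adjoint hA hext).1
    _ = _ := rank_quotient_adjoint_domain hA hext hclosedA hclosed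

theorem stmt_10 (C : Conjugation H) (A Atil : H →ₗ.[ℂ] H) (hA : Dense (A.domain : Set H))
    (hclosedA : A.IsClosed) (hsym : C.IsCSymmetric A)
    (hext : A ≤ Atil) (hsa : C.IsCSelfAdjoint Atil) :
    Module.rank ℂ
        (↥(C.conjOp (A†)).domain ⧸ Submodule.comap (C.conjOp (A†)).domain.subtype Atil.domain)
      = Module.rank ℂ (↥Atil.domain ⧸ Submodule.comap Atil.domain.subtype A.domain) :=
  stmt_10_general C A Atil hA hclosedA hext hsa
end
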